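/- arXiv:2011.02817 — 3 statements merged into one kernel-verified Lean document; each statement's English description precedes it below -/
import Mathlib

section
/- If x₁,…,x_n are nonnegative reals with ∑ᵢ xᵢ = L and each xᵢ ≤ 1, then ∑ᵢ i·xᵢ ≥ L²/2. -/
/-! Adding `x k` to a partial sum `S ≤ k` raises its square by `x k * (2 * S + x k) ≤ (2 * k + 1) * x k`,
so `L ^ 2 ≤ ∑ (2 * i + 1) * x i ≤ 2 * ∑ (i + 1) * x i` (with `0`-based `i`). -/

theorem sum_le_card_of_le_one {n : ℕ} (x : Fin n → ℝ) (hx1 : ∀ i, x i ≤ 1) :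
    ∑ i, x i ≤ n := by
  simpa using Finset.sum_le_sum fun i (_ : i ∈ Finset.univ) => hx1 i

theorem sq_sum_le_sum_two_mul_add_one_mul {n : ℕ} (x : Fin n → ℝ) (hx0 : ∀ i, 0 ≤ x i)
    (hx1 : ∀ i, x i ≤ 1) : (∑ i, x i) ^ 2 ≤ ∑ i : Fin n, (2 * (i : ℕ) + 1 : ℝ) * x i := by
  induction n with
  | zero => simp
  | succ n ih =>
    have hprefix := ih (x ∘ Fin.castSucc) (fun i => hx0 _) (fun i => hx1 _)
    have hprefix_le := sum_le_card_of_le_one (x ∘ Fin.castSucc) (fun i => hx1 _)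
    simp only [Function.comp_apply] at hprefix hprefix_le
    simp only [Fin.sum_univ_castSucc, Fin.val_castSucc, Fin.val_last]
    have hlast_sq : x (Fin.last n) ^ 2 ≤ x (Fin.last n) := by
      nlinarith [hx0 (Fin.last n), hx1 (Fin.last n)]
    nlinarith [hx0 (Fin.last n)]

theorem stmt_0_general (n : ℕ) (L : ℝ) (x : Fin n → ℝ)
    (hx0 : ∀ i, 0 ≤ x i) (hx1 : ∀ i, x i ≤ 1) (hsum : ∑ i, x i = L) :
    ∑ i : Fin n, ((i : ℕ) + 1 : ℝ) * x i ≥ L ^ 2 / 2 := by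
  have hodd := sq_sum_le_sum_two_mul_add_one_mul x hx0 hx1
  have hodd_le : ∑ i : Fin n, (2 * (i : ℕ) + 1 : ℝ) * x i
      ≤ 2 * ∑ i : Fin n, ((i : ℕ) + 1 : ℝ) * x i := by
    rw [Finset.mul_sum]
    exact Finset.sum_le_sum fun i _ => by nlinarith [hx0 i]
  rw [hsum] at hodd
  linarith

theorem stmt_0 (n : ℕ) (hn : 0 < n) (L : ℝ) (hL : 0 ≤ L) (x : Fin n → ℝ)
    (hx0 : ∀ i, 0 ≤ x i) (hx1 : ∀ i, x i ≤ 1) (hsum : ∑ i, x i = L) :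
    ∑ i : Fin n, ((i : ℕ) + 1 : ℝ) * x i ≥ L ^ 2 / 2 :=
  stmt_0_general n L x hx0 hx1 hsum
end

section
/- Every doubly stochastic matrix is a convex combination of permutation matrices (Birkhoff–von Neumann theorem). -/
def DoublyStochastic (n : ℕ) (A : Matrix (Fin n) (Fin n) ℝ) : Prop :=
  (∀ i j, 0 ≤ A i j) ∧ (∀ i, ∑ j, A i j = 1) ∧ (∀ j, ∑ i, A i j = 1)

/-- The permutation matrix of `σ`, with `(P_σ)_{ij} = 1` iff `σ j = i`. -/
def permMat (n : ℕ) (σ : Equiv.Perm (Fin n)) : Matrix (Fin n) (Fin n) ℝ :=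
  Matrix.of fun i j => if σ j = i then (1 : ℝ) else 0

theorem doublyStochastic_iff_mem_doublyStochastic {n : ℕ} {A : Matrix (Fin n) (Fin n) ℝ} :
    DoublyStochastic n A ↔ A ∈ doublyStochastic ℝ (Fin n) := by
  rw [mem_doublyStochastic_iff_sum, DoublyStochastic]

theorem permMat_eq_permMatrix_inv (n : ℕ) (σ : Equiv.Perm (Fin n)) :
    permMat n σ = σ⁻¹.permMatrix ℝ := by
  ext i j
  simp [permMat, Equiv.Perm.permMatrix, PEquiv.toMatrix_apply, Equiv.Perm.inv_def,
    Equiv.symm_apply_eq, eq_comm (a := i)]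

/-- Birkhoff–von Neumann theorem. -/
theorem stmt_13 (n : ℕ) (A : Matrix (Fin n) (Fin n) ℝ) (hA : DoublyStochastic n A) :
    ∃ (k : ℕ) (w : Fin k → ℝ) (σ : Fin k → Equiv.Perm (Fin n)),
      (∀ i, 0 ≤ w i) ∧ (∑ i, w i = 1) ∧ A = ∑ i, w i • permMat n (σ i) := by
  obtain ⟨w, hw_nonneg, hw_sum, hwA⟩ :=
    exists_eq_sum_perm_of_mem_doublyStochastic (doublyStochastic_iff_mem_doublyStochastic.mp hA)
  let e := (Fintype.equivFin (Equiv.Perm (Fin n))).symm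
  refine ⟨_, w ∘ e, fun i => (e i)⁻¹, fun i => hw_nonneg (e i), (e.sum_comp w).trans hw_sum, ?_⟩
  simp only [Function.comp_apply, permMat_eq_permMatrix_inv, inv_inv]
  rw [e.sum_comp (fun σ => w σ • σ.permMatrix ℝ), hwA]
end

section
/- Let A be an n×n doubly stochastic matrix and B the matrix obtained by setting B := Q·A for Q > 0 and then, for each row e and each j ≤ ⌊n/2⌋, adding B_{ej} to B_{e,2j}. Then for every row e and all i, k with 2^k·i ≤ n: ∑_{j=1}^{2^k·i} B_{ej} ≥ (k+1)·Q·∑_{j=1}^{i} A_{ej}; and for every i: ∑_{j=1}^{i} ∑_{e=1}^{n} B_{ej} ≤ 2Q·i. -/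
open Classical in
/-- The matrix `B` produced by the doubling transformation:
`B_{ej} = Q·∑_{j',s : (j'+1)·2^s = j+1} A_{ej'}` (positions are 1-based:
column `j : Fin n` has position `j+1`). -/
noncomputable def Bdoub (n : ℕ) (Q : ℝ) (A : Matrix (Fin n) (Fin n) ℝ) (e j : Fin n) : ℝ :=
  Q * ∑ j' ∈ Finset.univ.filter
      (fun j' : Fin n => ∃ s ∈ Finset.range (n + 1), ((j' : ℕ) + 1) * 2 ^ s = (j : ℕ) + 1),
    A e j'

open Finset

theorem sum_sum_filter_eq_sum_card_smul {ι M : Type*} [Fintype ι] [AddCommMonoid M]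
    (R : ι → ι → Prop) [DecidableRel R] (S : Finset ι) (f : ι → M) :
    ∑ j ∈ S, ∑ j' with R j' j, f j' = ∑ j', #{j ∈ S | R j' j} • f j' := by
  simp only [sum_filter]
  rw [sum_comm]
  simp only [← sum_filter, sum_const]

def DoublesInto (n : ℕ) (j' j : Fin n) : Prop :=
  ∃ s ∈ range (n + 1), ((j' : ℕ) + 1) * 2 ^ s = (j : ℕ) + 1

section
open Classical

variable {n : ℕ}

theorem Bdoub_eq (Q : ℝ) (A : Matrix (Fin n) (Fin n) ℝ) (e j : Fin n) :
    Bdoub n Q A e j = Q * ∑ j' with DoublesInto n j' j, A e j' :=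
  rfl

theorem sum_Bdoub_eq (Q : ℝ) (A : Matrix (Fin n) (Fin n) ℝ) (e : Fin n) (S : Finset (Fin n)) :
    ∑ j ∈ S, Bdoub n Q A e j = Q * ∑ j', #{j ∈ S | DoublesInto n j' j} * A e j' := by
  simp only [Bdoub_eq, ← mul_sum, sum_sum_filter_eq_sum_card_smul, nsmul_eq_mul]

theorem sum_Bdoub_eq_mul_card (Q : ℝ) {A : Matrix (Fin n) (Fin n) ℝ} (hA : ∀ j, ∑ e, A e j = 1)
    (j : Fin n) : ∑ e, Bdoub n Q A e j = Q * #{j' | DoublesInto n j' j} := by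
  simp only [Bdoub_eq, ← mul_sum]
  rw [sum_comm (f := fun e j' => A e j')]
  simp only [hA, sum_const, nsmul_eq_mul, mul_one]

theorem succ_le_card_doublesInto {i k : ℕ} (hik : 2 ^ k * i ≤ n) {j' : Fin n}
    (hj' : (j' : ℕ) < i) :
    k + 1 ≤ #{j : Fin n | (j : ℕ) < 2 ^ k * i ∧ DoublesInto n j' j} := by
  have hk : k < n + 1 := by
    have := Nat.lt_two_pow_self (n := k)
    have := Nat.le_mul_of_pos_right (2 ^ k) (by omega : 0 < i)
    omega
  calc k + 1 = #((range (k + 1)).image fun s => ((j' : ℕ) + 1) * 2 ^ s) := by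
        rw [card_image_of_injective _ fun a b h => Nat.pow_right_injective le_rfl
          (Nat.eq_of_mul_eq_mul_left (Nat.succ_pos _) h), card_range]
    _ ≤ #(image (fun j : Fin n => (j : ℕ) + 1)
          {j | (j : ℕ) < 2 ^ k * i ∧ DoublesInto n j' j}) := by
        refine card_le_card fun m hm => ?_
        obtain ⟨s, hs, rfl⟩ := mem_image.1 hm
        have hsk : s ≤ k := Nat.lt_succ_iff.1 (mem_range.1 hs)
        have hle : ((j' : ℕ) + 1) * 2 ^ s ≤ 2 ^ k * i := by
          rw [mul_comm]; exact Nat.mul_le_mul (Nat.pow_le_pow_right two_pos hsk) hj'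
        have hpos : 0 < ((j' : ℕ) + 1) * 2 ^ s := by positivity
        refine mem_image.2 ⟨⟨((j' : ℕ) + 1) * 2 ^ s - 1, by omega⟩, mem_filter.2 ⟨mem_univ _,
          by simp only; omega, s, mem_range.2 (by omega), (Nat.sub_add_cancel hpos).symm⟩,
          Nat.sub_add_cancel hpos⟩
    _ ≤ _ := card_image_le

theorem sum_card_doublesInto_le (i : ℕ) :
    ∑ j ∈ univ.filter fun j : Fin n => (j : ℕ) < i, #{j' | DoublesInto n j' j} ≤ 2 * i := by
  rw [← card_sigma]
  calc _ = #(((univ.filter fun j : Fin n => (j : ℕ) < i).sigma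
          fun j => univ.filter fun j' => DoublesInto n j' j).image
          fun p => ((p.2 : ℕ), (p.1 : ℕ) + 1)) := by
        refine (card_image_of_injective _ ?_).symm
        rintro ⟨j, j'⟩ ⟨l, l'⟩ h
        simp only [Prod.mk.injEq, add_left_inj, Fin.val_inj] at h
        rw [h.1, h.2]
    _ ≤ #((range (n + 1)).sigma fun s => range (i / 2 ^ s)) := by
        refine card_le_card_of_surjOn (fun p => (p.2, (p.2 + 1) * 2 ^ p.1)) ?_
        rintro _ hq
        obtain ⟨⟨j, j'⟩, hp, rfl⟩ := mem_image.1 hq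
        simp only [mem_sigma, mem_filter, mem_univ, true_and] at hp
        obtain ⟨hji, s, hs, hjj⟩ := hp
        refine ⟨⟨s, j'⟩, ?_, by simp [hjj]⟩
        simp only [coe_sigma, Set.mem_sigma_iff, coe_range, Set.mem_Iio]
        exact ⟨mem_range.1 hs, show (j' : ℕ) + 1 ≤ i / 2 ^ s from
          (Nat.le_div_iff_mul_le (by positivity)).2 (by omega)⟩
    _ = ∑ s ∈ range (n + 1), i / 2 ^ s := by simp
    _ ≤ 2 * i := by simpa [mul_comm] using Nat.geom_sum_le le_rfl i (n + 1)

end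

theorem stmt_17 (n : ℕ) (Q : ℝ) (hQ : 0 < Q) (A : Matrix (Fin n) (Fin n) ℝ)
    (hA : DoublyStochastic n A) :
    (∀ (e : Fin n) (i k : ℕ), 2 ^ k * i ≤ n →
      ∑ j ∈ Finset.univ.filter (fun j : Fin n => (j : ℕ) < 2 ^ k * i), Bdoub n Q A e j ≥
        (k + 1 : ℝ) * Q * ∑ j ∈ Finset.univ.filter (fun j : Fin n => (j : ℕ) < i), A e j) ∧
    (∀ i : ℕ, i ≤ n →
      ∑ j ∈ Finset.univ.filter (fun j : Fin n => (j : ℕ) < i), ∑ e : Fin n, Bdoub n Q A e j ≤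
        2 * Q * i) := by
  classical
  obtain ⟨hnonneg, -, hcol⟩ := hA
  refine ⟨fun e i k hik => ?_, fun i _ => ?_⟩
  · rw [ge_iff_le, sum_Bdoub_eq, mul_comm _ Q, mul_assoc]
    refine mul_le_mul_of_nonneg_left ?_ hQ.le
    simp only [filter_filter, mul_sum]
    calc ∑ j ∈ univ.filter fun j : Fin n => (j : ℕ) < i, ((k : ℝ) + 1) * A e j
        ≤ ∑ j' ∈ univ.filter fun j' : Fin n => (j' : ℕ) < i,
            (#{j : Fin n | (j : ℕ) < 2 ^ k * i ∧ DoublesInto n j' j} : ℝ) * A e j' := by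
          refine sum_le_sum fun j' hj' => mul_le_mul_of_nonneg_right ?_ (hnonneg e j')
          exact_mod_cast succ_le_card_doublesInto hik (mem_filter.1 hj').2
      _ ≤ _ := sum_le_sum_of_subset_of_nonneg (filter_subset _ _) fun j' _ _ =>
          mul_nonneg (Nat.cast_nonneg _) (hnonneg e j')
  · simp only [sum_Bdoub_eq_mul_card Q hcol, ← mul_sum]
    calc Q * ∑ j ∈ univ.filter fun j : Fin n => (j : ℕ) < i, (#{j' | DoublesInto n j' j} : ℝ)
        ≤ Q * (2 * i) := by gcongr; exact_mod_cast sum_card_doublesInto_le i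
      _ = 2 * Q * i := by ring
end
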